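/- Let Γ be a finite connected bipartite graph with ordered bipartition (B|B') that is r-starlike relative to N for some r ≥ 2, and locally (G,2)-distance transitive for some G ≤ Aut(Γ) with 1 ≠ N ⊴ G. Then either Γ is a complete bipartite graph, or: any two distinct vertices of Γ have distinct neighbourhoods (Γ(x) = Γ(x') implies x = x'), and G acts faithfully on B and faithfully on B'. -/

import Mathlib

open SimpleGraph

section Prelude

variable {V : Type*}

/-- `g` is an automorphism of the graph `Γ`. -/
def IsGraphAut (Γ : SimpleGraph V) (g : Equiv.Perm V) : Prop :=
  ∀ u v : V, Γ.Adj (g u) (g v) ↔ Γ.Adj u v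

/-- `(B | Bᶜ)` is an (ordered) bipartition of `Γ`: every edge joins `B` and `Bᶜ`. -/
def IsBipartition (Γ : SimpleGraph V) (B : Set V) : Prop :=
  ∀ u v : V, Γ.Adj u v → (u ∈ B ↔ v ∉ B)

/-- The orbit of `x` under a subgroup `N` of permutations of `V`. -/
def POrbit (N : Subgroup (Equiv.Perm V)) (x : V) : Set V :=
  {y | ∃ n ∈ N, n x = y}

/-- `Γ` is locally `(G,s)`-distance transitive: the diameter is at least `s` and for
every vertex `v` and every `1 ≤ i ≤ s` the stabiliser of `v` in `G` is transitive on
the set of vertices at distance `i` from `v`. -/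
def LocallyDistTrans (Γ : SimpleGraph V) (G : Subgroup (Equiv.Perm V)) (s : ℕ) : Prop :=
  s ≤ Γ.diam ∧
    ∀ (v x y : V) (i : ℕ), 1 ≤ i → i ≤ s → Γ.dist v x = i → Γ.dist v y = i →
      ∃ g ∈ G, g v = v ∧ g x = y

/-- `Γ`, bipartite with ordered bipartition `(B | Bᶜ)`, is `r`-starlike relative to `N`:
`N` leaves `B` invariant, is transitive on `B`, and has exactly `r` orbits on `Bᶜ`. -/
def IsStarlike (Γ : SimpleGraph V) (B : Set V) (N : Subgroup (Equiv.Perm V)) (r : ℕ) : Prop :=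
  (∀ n ∈ N, ∀ v : V, n v ∈ B ↔ v ∈ B) ∧
    (∀ x ∈ B, ∀ y ∈ B, ∃ n ∈ N, n x = y) ∧
    {S : Set V | ∃ x ∈ Bᶜ, S = POrbit N x}.ncard = r

/-- `G` is transitive on the set `S` of (ordered) pairs. -/
def PairTrans (G : Subgroup (Equiv.Perm V)) (S : Set (V × V)) : Prop :=
  ∀ p ∈ S, ∀ q ∈ S, ∃ g ∈ G, g p.1 = q.1 ∧ g p.2 = q.2

/-- The adjacency design of the bipartite graph `Γ` with ordered bipartition `(B | Bᶜ)`
(points `B`, blocks `Bᶜ`, incidence = adjacency) is `G`-pairwise transitive. -/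
def AdjPT (Γ : SimpleGraph V) (B : Set V) (G : Subgroup (Equiv.Perm V)) : Prop :=
  (∀ g ∈ G, ∀ v : V, g v ∈ B ↔ v ∈ B) ∧
  PairTrans G {p | p.1 ∈ B ∧ p.2 ∈ Bᶜ ∧ Γ.Adj p.1 p.2} ∧
  PairTrans G {p | p.1 ∈ B ∧ p.2 ∈ Bᶜ ∧ ¬ Γ.Adj p.1 p.2} ∧
  PairTrans G {p | p.1 ∈ B ∧ p.2 ∈ B ∧ p.1 ≠ p.2 ∧ ∃ b ∈ Bᶜ, Γ.Adj p.1 b ∧ Γ.Adj p.2 b} ∧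
  PairTrans G {p | p.1 ∈ B ∧ p.2 ∈ B ∧ p.1 ≠ p.2 ∧ ¬ ∃ b ∈ Bᶜ, Γ.Adj p.1 b ∧ Γ.Adj p.2 b} ∧
  PairTrans G {p | p.1 ∈ Bᶜ ∧ p.2 ∈ Bᶜ ∧ p.1 ≠ p.2 ∧ ∃ x ∈ B, Γ.Adj x p.1 ∧ Γ.Adj x p.2} ∧
  PairTrans G {p | p.1 ∈ Bᶜ ∧ p.2 ∈ Bᶜ ∧ p.1 ≠ p.2 ∧ ¬ ∃ x ∈ B, Γ.Adj x p.1 ∧ Γ.Adj x p.2}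

/-- The adjacency design of `Γ` (points `B`, blocks `Bᶜ`) is `N`-nicely affine:
`N` acts as automorphisms preserving the biparts, transitively on points, and there is a
constant `μ` such that distinct blocks in different `N`-orbits have exactly `μ` common
points, while distinct blocks in the same `N`-orbit have no common point. -/
def AdjNA (Γ : SimpleGraph V) (B : Set V) (N : Subgroup (Equiv.Perm V)) : Prop :=
  (∀ n ∈ N, ∀ v : V, n v ∈ B ↔ v ∈ B) ∧
  (∀ x ∈ B, ∀ y ∈ B, ∃ n ∈ N, n x = y) ∧
  ∃ μ : ℕ, ∀ b ∈ Bᶜ, ∀ b' ∈ Bᶜ, b ≠ b' →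
    ((b' ∈ POrbit N b → ¬ ∃ x, Γ.Adj x b ∧ Γ.Adj x b') ∧
     (b' ∉ POrbit N b → {x | Γ.Adj x b ∧ Γ.Adj x b'}.ncard = μ))

/-- The adjacency design of `Γ` (points `B`, blocks `Bᶜ`) is affine: the blocks can be
partitioned into parallel classes, and there is a positive constant `μ` such that blocks
in distinct parallel classes have exactly `μ` common points. -/
def AdjAffine (Γ : SimpleGraph V) (B : Set V) : Prop :=
  ∃ 𝓒 : Set (Set V), (∀ C ∈ 𝓒, C ⊆ Bᶜ) ∧ (∀ b ∈ Bᶜ, ∃! C, C ∈ 𝓒 ∧ b ∈ C) ∧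
    (∀ C ∈ 𝓒, ∀ x ∈ B, ∃! b, b ∈ C ∧ Γ.Adj x b) ∧
    ∃ μ : ℕ, 0 < μ ∧ ∀ C ∈ 𝓒, ∀ C' ∈ 𝓒, C ≠ C' → ∀ b ∈ C, ∀ b' ∈ C',
      {x | Γ.Adj x b ∧ Γ.Adj x b'}.ncard = μ

end Prelude

section DesignPrelude

variable {P L : Type*}

/-- The design `(P, L, I)` is `G`-pairwise transitive. -/
def DesignPT (I : P → L → Prop) (G : Type*) [Group G] [MulAction G P] [MulAction G L] :
    Prop :=
  (∀ (x : P) (b : L) (x' : P) (b' : L), I x b → I x' b' →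
      ∃ g : G, g • x = x' ∧ g • b = b') ∧
  (∀ (x : P) (b : L) (x' : P) (b' : L), ¬ I x b → ¬ I x' b' →
      ∃ g : G, g • x = x' ∧ g • b = b') ∧
  (∀ x y x' y' : P, x ≠ y → x' ≠ y' → (∃ b, I x b ∧ I y b) → (∃ b, I x' b ∧ I y' b) →
      ∃ g : G, g • x = x' ∧ g • y = y') ∧
  (∀ x y x' y' : P, x ≠ y → x' ≠ y' → ¬ (∃ b, I x b ∧ I y b) → ¬ (∃ b, I x' b ∧ I y' b) →
      ∃ g : G, g • x = x' ∧ g • y = y') ∧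
  (∀ b c b' c' : L, b ≠ c → b' ≠ c' → (∃ x, I x b ∧ I x c) → (∃ x, I x b' ∧ I x c') →
      ∃ g : G, g • b = b' ∧ g • c = c') ∧
  (∀ b c b' c' : L, b ≠ c → b' ≠ c' → ¬ (∃ x, I x b ∧ I x c) → ¬ (∃ x, I x b' ∧ I x c') →
      ∃ g : G, g • b = b' ∧ g • c = c')

/-- The design `(P, L, I)` is `N`-nicely affine for the subgroup `N` of `G`. -/
def DesignNA (I : P → L → Prop) (G : Type*) [Group G] [MulAction G P] [MulAction G L]
    (N : Subgroup G) : Prop :=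
  (∀ x y : P, ∃ n ∈ N, n • x = y) ∧
  ∃ μ : ℕ, ∀ b b' : L, b ≠ b' →
    (((∃ n ∈ N, n • b = b') → ¬ ∃ x, I x b ∧ I x b') ∧
     ((¬ ∃ n ∈ N, n • b = b') → {x | I x b ∧ I x b'}.ncard = μ))

/-- The incidence graph of the design `(P, L, I)`. -/
def DIncGraph (I : P → L → Prop) : SimpleGraph (P ⊕ L) :=
  SimpleGraph.fromRel (fun a b => ∃ x s, a = Sum.inl x ∧ b = Sum.inr s ∧ I x s)

end DesignPrelude

section SetDesign

variable {V : Type*}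

/-- Pairwise transitivity for a design whose points are the elements of `V`, whose
blocks are the members of `𝓑` (identified with their point-sets) and whose
incidence relation is membership; `G` is a group of permutations of `V`. -/
def SetPT (𝓑 : Set (Set V)) (G : Subgroup (Equiv.Perm V)) : Prop :=
  (∀ x : V, ∀ s ∈ 𝓑, ∀ x' : V, ∀ s' ∈ 𝓑, x ∈ s → x' ∈ s' →
      ∃ g ∈ G, g x = x' ∧ (fun z => g z) '' s = s') ∧
  (∀ x : V, ∀ s ∈ 𝓑, ∀ x' : V, ∀ s' ∈ 𝓑, x ∉ s → x' ∉ s' →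
      ∃ g ∈ G, g x = x' ∧ (fun z => g z) '' s = s') ∧
  (∀ x y x' y' : V, x ≠ y → x' ≠ y' → (∃ s ∈ 𝓑, x ∈ s ∧ y ∈ s) → (∃ s ∈ 𝓑, x' ∈ s ∧ y' ∈ s) →
      ∃ g ∈ G, g x = x' ∧ g y = y') ∧
  (∀ x y x' y' : V, x ≠ y → x' ≠ y' → ¬ (∃ s ∈ 𝓑, x ∈ s ∧ y ∈ s) → ¬ (∃ s ∈ 𝓑, x' ∈ s ∧ y' ∈ s) →
      ∃ g ∈ G, g x = x' ∧ g y = y') ∧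
  (∀ s ∈ 𝓑, ∀ t ∈ 𝓑, ∀ s' ∈ 𝓑, ∀ t' ∈ 𝓑, s ≠ t → s' ≠ t' →
      (s ∩ t).Nonempty → (s' ∩ t').Nonempty →
      ∃ g ∈ G, (fun z => g z) '' s = s' ∧ (fun z => g z) '' t = t') ∧
  (∀ s ∈ 𝓑, ∀ t ∈ 𝓑, ∀ s' ∈ 𝓑, ∀ t' ∈ 𝓑, s ≠ t → s' ≠ t' →
      s ∩ t = ∅ → s' ∩ t' = ∅ →
      ∃ g ∈ G, (fun z => g z) '' s = s' ∧ (fun z => g z) '' t = t')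

/-- Nice affineness for a design with point set `V`, blocks `𝓑` (point-sets) and
incidence given by membership, relative to a permutation group `N`. -/
def SetNA (𝓑 : Set (Set V)) (N : Subgroup (Equiv.Perm V)) : Prop :=
  (∀ x y : V, ∃ n ∈ N, n x = y) ∧
  (∀ n ∈ N, ∀ s ∈ 𝓑, (fun z => n z) '' s ∈ 𝓑) ∧
  ∃ μ : ℕ, ∀ s ∈ 𝓑, ∀ s' ∈ 𝓑, s ≠ s' →
    (((∃ n ∈ N, (fun z => n z) '' s = s') → s ∩ s' = ∅) ∧
     ((¬ ∃ n ∈ N, (fun z => n z) '' s = s') → (s ∩ s').ncard = μ))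

end SetDesign

section QuotientGraph

variable {V : Type*}

/-- The setoid on vertices whose classes are the `N`-orbits. -/
def orbitSetoid (N : Subgroup (Equiv.Perm V)) : Setoid V where
  r x y := ∃ n ∈ N, n x = y
  iseqv := by
    refine ⟨fun x => ⟨1, N.one_mem, rfl⟩, ?_, ?_⟩
    · rintro x y ⟨n, hn, rfl⟩
      exact ⟨n⁻¹, N.inv_mem hn, by simp⟩
    · rintro x y z ⟨n, hn, rfl⟩ ⟨m, hm, rfl⟩
      exact ⟨m * n, N.mul_mem hm hn, rfl⟩

/-- The normal quotient graph `Γ_N`: vertices are the `N`-orbits, two distinct orbits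
being adjacent iff some vertex of one is adjacent to some vertex of the other. -/
def quotGraph (Γ : SimpleGraph V) (N : Subgroup (Equiv.Perm V)) :
    SimpleGraph (Quotient (orbitSetoid N)) :=
  SimpleGraph.fromRel (fun a b => ∃ x y : V, Γ.Adj x y ∧
    Quotient.mk (orbitSetoid N) x = a ∧ Quotient.mk (orbitSetoid N) y = b)

end QuotientGraph

section Subdivision

variable {W : Type*}

/-- The subdivision graph `S(Σ)` of a graph `Σ`: vertices are `EΣ ⊕ VΣ`, an edge
being adjacent to its endpoints. -/
def SubdivisionGraph (Sg : SimpleGraph W) : SimpleGraph (↥Sg.edgeSet ⊕ W) :=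
  SimpleGraph.fromRel (fun a b => ∃ (e : Sg.edgeSet) (w : W),
    a = Sum.inl e ∧ b = Sum.inr w ∧ w ∈ (e : Sym2 W))

/-- The graph on `B'` in which two vertices are adjacent iff they are at distance `2`
in `Γ`. -/
def distTwoGraph (Γ : SimpleGraph W) (B' : Set W) : SimpleGraph ↥B' where
  Adj a b := Γ.dist ↑a ↑b = 2
  symm := by
    constructor
    intro a b h
    exact (SimpleGraph.dist_comm).trans h
  loopless := by
    constructor
    intro a h
    simp [SimpleGraph.dist_self] at h

/-- `f 0, f 1, …, f t` is a `t`-arc of `Sg`. -/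
def IsArcOf (Sg : SimpleGraph W) (t : ℕ) (f : ℕ → W) : Prop :=
  (∀ i : ℕ, i < t → Sg.Adj (f i) (f (i + 1))) ∧
  (∀ i : ℕ, 1 ≤ i → i + 1 ≤ t → f (i - 1) ≠ f (i + 1))

end Subdivision

/-!
If two distinct vertices `a`, `b` have the same neighbourhood, they are at distance `2`, and
the stabiliser of `a` carries `b` to every vertex at distance `2` from `a`; so all those vertices
share the neighbourhood of `a`. Walking outwards two steps at a time, every vertex in the part of
`a` has the neighbourhood of `a`, and then `Γ` is complete bipartite. Otherwise vertices are
determined by their neighbourhoods, and an automorphism fixing one part pointwise fixes the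
neighbourhood of every vertex of the other part, hence that vertex too.
-/

namespace SimpleGraph

variable {V : Type*} {Γ : SimpleGraph V}

lemma exists_adj_dist_eq_of_dist_eq_add_one {v z : V} {d : ℕ} (h : Γ.dist v z = d + 1) :
    ∃ y, Γ.Adj y z ∧ Γ.dist v y = d := by
  obtain ⟨p, hp⟩ := exists_walk_of_dist_ne_zero (G := Γ) (u := v) (v := z) (by omega)
  have hnil : ¬ p.Nil := by
    rw [← Walk.length_eq_zero_iff, hp, h]
    exact d.succ_ne_zero
  have hyz := p.adj_penultimate hnil
  refine ⟨p.penultimate, hyz, le_antisymm ?_ ?_⟩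
  · have := dist_le p.dropLast
    rw [Walk.dropLast, Walk.take_length, hp, h] at this
    omega
  · have := (hyz.reachable.dist_triangle_right v)
    rw [h, dist_eq_one_iff_adj.mpr hyz] at this
    omega

lemma Connected.dist_eq_two_of_neighborSet_eq (hconn : Γ.Connected) {a b : V} (hab : a ≠ b)
    (h : Γ.neighborSet a = Γ.neighborSet b) : Γ.dist a b = 2 := by
  have : Nontrivial V := ⟨a, b, hab⟩
  obtain ⟨u, hau⟩ := hconn.preconnected.exists_adj_of_nontrivial a
  have hbu : Γ.Adj b u := (Set.ext_iff.mp h u).mp hau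
  have hnadj : ¬ Γ.Adj a b := fun hadj => Γ.loopless.irrefl b ((Set.ext_iff.mp h b).mp hadj)
  have hedist : Γ.edist a b = 2 :=
    edist_eq_two_iff.mpr ⟨hab, hnadj, ⟨u, (mem_commonNeighbors Γ).mpr ⟨hau, hbu⟩⟩⟩
  exact_mod_cast (hconn a b).coe_dist_eq_edist.trans hedist

end SimpleGraph

section Twins

variable {V : Type*} {Γ : SimpleGraph V}

lemma IsGraphAut.neighborSet_apply {g : Equiv.Perm V} (hg : IsGraphAut Γ g) (v : V) :
    Γ.neighborSet (g v) = (fun z => g z) '' Γ.neighborSet v := by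
  ext u
  refine ⟨fun hu => ⟨g⁻¹ u, (hg v (g⁻¹ u)).mp (by simpa using hu), g.apply_symm_apply u⟩, ?_⟩
  rintro ⟨w, hw, rfl⟩
  exact (hg v w).mpr hw

lemma IsGraphAut.eq_one_of_forall_mem_apply_eq {g : Equiv.Perm V} (hg : IsGraphAut Γ g)
    (hinj : ∀ x x' : V, Γ.neighborSet x = Γ.neighborSet x' → x = x') {S : Set V}
    (hS : ∀ x ∉ S, Γ.neighborSet x ⊆ S) (hfix : ∀ x ∈ S, g x = x) : g = 1 := by
  ext v
  by_cases hv : v ∈ S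
  · exact hfix v hv
  · refine hinj _ _ ?_
    rw [hg.neighborSet_apply]
    exact Set.EqOn.image_eq_self fun w hw => hfix w (hS v hv hw)

lemma IsBipartition.even_dist {B : Set V} (hbip : IsBipartition Γ B) (hconn : Γ.Connected)
    {a b : V} (h : a ∈ B ↔ b ∈ B) : Even (Γ.dist a b) := by
  classical
  let c : Γ.Coloring Bool := Coloring.mk (fun v => decide (v ∈ B)) fun {v w} hvw => by
    have := hbip v w hvw
    simp only [ne_eq, decide_eq_decide]
    tauto
  obtain ⟨p, hp⟩ := hconn.exists_walk_length_eq_dist a b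
  rw [← hp, c.even_length_iff_congr]
  show decide (a ∈ B) = true ↔ decide (b ∈ B) = true
  simpa using h

variable (hconn : Γ.Connected)
  (htrans : ∀ v x y : V, Γ.dist v x = 2 → Γ.dist v y = 2 →
    ∃ g : Equiv.Perm V, IsGraphAut Γ g ∧ g v = v ∧ g x = y)
include hconn htrans

lemma neighborSet_eq_of_dist_eq_two {a b z : V} (hab : a ≠ b)
    (h : Γ.neighborSet a = Γ.neighborSet b) (hz : Γ.dist a z = 2) :
    Γ.neighborSet z = Γ.neighborSet a := by
  obtain ⟨g, hg, hga, hgb⟩ := htrans a b z (hconn.dist_eq_two_of_neighborSet_eq hab h) hz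
  rw [← hgb, hg.neighborSet_apply, ← h, ← hg.neighborSet_apply, hga]

lemma neighborSet_eq_of_dist_eq_two_mul {a b : V} (hab : a ≠ b)
    (h : Γ.neighborSet a = Γ.neighborSet b) (k : ℕ) :
    ∀ z, Γ.dist a z = 2 * k → Γ.neighborSet z = Γ.neighborSet a := by
  induction k with
  | zero =>
    intro z hz
    rw [(hconn.dist_eq_zero_iff).mp hz]
  | succ k ih =>
    intro z hz
    obtain ⟨y, hyz, hy⟩ := exists_adj_dist_eq_of_dist_eq_add_one (d := 2 * k + 1) hz
    obtain ⟨x, hxy, hx⟩ := exists_adj_dist_eq_of_dist_eq_add_one hy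
    have hxN := ih x hx
    have hxz : Γ.dist x z = 2 := by
      have hle := dist_le (Walk.cons hxy hyz.toWalk)
      have htri := hconn.dist_triangle (u := a) (v := x) (w := z)
      simp only [Walk.length_cons, Walk.length_nil] at hle
      omega
    rcases eq_or_ne x a with rfl | hxa
    · exact neighborSet_eq_of_dist_eq_two hconn htrans hab h hxz
    · rw [neighborSet_eq_of_dist_eq_two hconn htrans hxa hxN hxz, hxN]

lemma IsBipartition.adj_of_neighborSet_eq {B : Set V} (hbip : IsBipartition Γ B) {a b : V}
    (hab : a ≠ b) (h : Γ.neighborSet a = Γ.neighborSet b) :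
    ∀ x ∈ B, ∀ y ∈ Bᶜ, Γ.Adj x y := by
  have hsame : ∀ w, (w ∈ B ↔ a ∈ B) → Γ.neighborSet w = Γ.neighborSet a := by
    intro w hw
    obtain ⟨k, hk⟩ := hbip.even_dist hconn hw.symm
    exact neighborSet_eq_of_dist_eq_two_mul hconn htrans hab h k w (by omega)
  have hadj : ∀ w o, (w ∈ B ↔ a ∈ B) → (o ∈ B ↔ a ∉ B) → Γ.Adj w o := by
    intro w o hw ho
    have : Nontrivial V := ⟨a, b, hab⟩
    obtain ⟨u, hou⟩ := hconn.preconnected.exists_adj_of_nontrivial o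
    have hu : Γ.neighborSet u = Γ.neighborSet w := by
      rw [hsame w hw, hsame u (by have := hbip o u hou; tauto)]
    exact show o ∈ Γ.neighborSet w from hu ▸ hou.symm
  intro x hx y hy
  by_cases haB : a ∈ B
  · exact hadj x y (by tauto) (by tauto)
  · exact (hadj y x (by tauto) (by tauto)).symm

end Twins

theorem statement9_general {V : Type*} (Γ : SimpleGraph V) (B : Set V)
    (hconn : Γ.Connected) (hbip : IsBipartition Γ B)
    (G : Subgroup (Equiv.Perm V)) (hGaut : ∀ g ∈ G, IsGraphAut Γ g)
    (hldt : LocallyDistTrans Γ G 2) :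
    (∀ x ∈ B, ∀ y ∈ Bᶜ, Γ.Adj x y) ∨
      ((∀ x x' : V, Γ.neighborSet x = Γ.neighborSet x' → x = x') ∧
        (∀ g ∈ G, (∀ x ∈ B, g x = x) → g = 1) ∧
        (∀ g ∈ G, (∀ x ∈ Bᶜ, g x = x) → g = 1)) := by
  have htrans : ∀ v x y : V, Γ.dist v x = 2 → Γ.dist v y = 2 →
      ∃ g : Equiv.Perm V, IsGraphAut Γ g ∧ g v = v ∧ g x = y := by
    intro v x y hx hy
    obtain ⟨g, hg, hgv, hgx⟩ := hldt.2 v x y 2 one_le_two le_rfl hx hy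
    exact ⟨g, hGaut g hg, hgv, hgx⟩
  by_cases hinj : ∀ x x' : V, Γ.neighborSet x = Γ.neighborSet x' → x = x'
  · refine Or.inr ⟨hinj, fun g hg => (hGaut g hg).eq_one_of_forall_mem_apply_eq hinj ?_,
      fun g hg => (hGaut g hg).eq_one_of_forall_mem_apply_eq hinj ?_⟩
    · exact fun x hx w hw => (hbip x w hw).not_left.mp hx
    · exact fun x hx w hw => (hbip x w hw).mp (not_not.mp hx)
  · push Not at hinj
    obtain ⟨a, b, h, hab⟩ := hinj
    exact Or.inl (hbip.adj_of_neighborSet_eq hconn htrans hab h)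

/-- **Lemma `lem:diffneigh`**.  If `Γ` is `r`-starlike (`r ≥ 2`) relative to `N` with
ordered bipartition `(B|Bᶜ)` and locally `(G,2)`-distance transitive with `1 ≠ N ⊴ G`,
then either `Γ` is complete bipartite, or distinct vertices have distinct
neighbourhoods and `G` acts faithfully on both `B` and `Bᶜ`. -/
theorem statement9 {V : Type*} [Fintype V] (Γ : SimpleGraph V) (B : Set V)
    (hconn : Γ.Connected) (hbip : IsBipartition Γ B)
    (G N : Subgroup (Equiv.Perm V)) (hGaut : ∀ g ∈ G, IsGraphAut Γ g)
    (hNG : N ≤ G) (hN1 : N ≠ ⊥) (hnorm : ∀ g ∈ G, ∀ n ∈ N, g * n * g⁻¹ ∈ N)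
    (r : ℕ) (hr : 2 ≤ r)
    (hstar : IsStarlike Γ B N r) (hldt : LocallyDistTrans Γ G 2) :
    (∀ x ∈ B, ∀ y ∈ Bᶜ, Γ.Adj x y) ∨
      ((∀ x x' : V, Γ.neighborSet x = Γ.neighborSet x' → x = x') ∧
        (∀ g ∈ G, (∀ x ∈ B, g x = x) → g = 1) ∧
        (∀ g ∈ G, (∀ x ∈ Bᶜ, g x = x) → g = 1)) :=
  statement9_general Γ B hconn hbip G hGaut hldt
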